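/- Let σ_I, σ_S ∈ ℝ², σ_I ≠ σ_S, T > 0, b > 0, r ∈ ℝ, and ξ ~ N(0, I₂). Then e^{−rT} E[ exp((r − ‖σ_I‖²/2)T + √T σ_I·ξ) · 1{ √T(σ_S − σ_I)·ξ ≥ ln b + ((‖σ_S‖² − ‖σ_I‖²)/2)T } ] = F( − ( (‖σ_S − σ_I‖²/2)T + ln b ) / ( ‖σ_S − σ_I‖ √T ) ), where F is the standard normal CDF. -/

import Mathlib

/-
Tilting the standard Gaussian by the density `exp (⟪a, x⟫ - ‖a‖² / 2)` shifts it by `a`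
(Cameron–Martin). In an orthonormal basis the standard Gaussian is a product of copies of
`N(0, 1)`, so this reduces to the one-dimensional identity `e^{t x - t²/2} φ(x) = φ(x - t)` for the
normal density `φ`. Hence `E[e^{⟪a, ξ⟫}; ⟪c, ξ⟫ ≥ k] = e^{‖a‖²/2} P(⟪c, ξ + a⟫ ≥ k)`, and
`⟪c, ξ + a⟫ ~ N(⟪c, a⟫, ‖c‖²)`. With `a = √T σ_I` and `c = √T (σ_S - σ_I)` the factor
`e^{‖a‖²/2}` cancels the discount and the drift.
-/

open MeasureTheory ProbabilityTheory

/-- The standard Gaussian measure `N(0, I_d)` on `EuclideanSpace ℝ (Fin d)`. -/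
noncomputable def stdGaussian (d : ℕ) : Measure (EuclideanSpace ℝ (Fin d)) :=
  (Measure.pi fun _ : Fin d => gaussianReal 0 1).map
    (EuclideanSpace.equiv (Fin d) ℝ).symm

/-- The standard normal distribution function `F`. -/
noncomputable def stdNormalCDF (x : ℝ) : ℝ := ((gaussianReal 0 1) (Set.Iic x)).toReal

open Real
open scoped ENNReal NNReal RealInnerProductSpace

lemma MeasureTheory.Measure.map_withDensity_comp {α β : Type*} [MeasurableSpace α]
    [MeasurableSpace β] (μ : Measure α) {f : α → β} (hf : Measurable f) {g : β → ℝ≥0∞}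
    (hg : Measurable g) :
    (μ.withDensity (g ∘ f)).map f = (μ.map f).withDensity g := by
  ext s hs
  rw [withDensity_apply _ hs, Measure.map_apply hf hs, withDensity_apply _ (hf hs),
    setLIntegral_map hs hg hf]
  rfl

lemma Set.indicator_univ_pi_prod_apply {ι M : Type*} [Fintype ι] [CommMonoidWithZero M]
    {X : ι → Type*} (s : ∀ i, Set (X i)) (f : ∀ i, X i → M) (x : ∀ i, X i) :
    (Set.univ.pi s).indicator (fun x ↦ ∏ i, f i (x i)) x = ∏ i, (s i).indicator (f i) (x i) := by
  by_cases hx : x ∈ Set.univ.pi s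
  · rw [Set.indicator_of_mem hx]
    exact Finset.prod_congr rfl fun i _ ↦ (Set.indicator_of_mem (hx i trivial) _).symm
  · obtain ⟨i, hi⟩ : ∃ i, x i ∉ s i := by simpa [Set.mem_pi] using hx
    rw [Set.indicator_of_notMem hx]
    exact (Finset.prod_eq_zero (Finset.mem_univ i) (Set.indicator_of_notMem hi _)).symm

lemma MeasureTheory.Measure.pi_withDensity {ι : Type*} [Fintype ι] {X : ι → Type*}
    [∀ i, MeasurableSpace (X i)] {μ : ∀ i, Measure (X i)} [∀ i, IsProbabilityMeasure (μ i)]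
    {f : ∀ i, X i → ℝ≥0∞} [∀ i, SigmaFinite ((μ i).withDensity (f i))]
    (hf : ∀ i, Measurable (f i)) :
    (Measure.pi μ).withDensity (fun x ↦ ∏ i, f i (x i)) =
      Measure.pi fun i ↦ (μ i).withDensity (f i) := by
  refine (Measure.pi_eq fun s hs ↦ ?_).symm
  have hfs : ∀ i, Measurable ((s i).indicator (f i)) := fun i ↦ (hf i).indicator (hs i)
  rw [withDensity_apply _ (.univ_pi hs), ← lintegral_indicator (.univ_pi hs)]
  simp_rw [Set.indicator_univ_pi_prod_apply]
  refine (lintegral_prod_eq_prod_lintegral_of_indepFun Finset.univ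
    (fun i (x : ∀ i, X i) ↦ (s i).indicator (f i) (x i)) (iIndepFun_pi fun i ↦ (hfs i).aemeasurable)
    fun i ↦ (hfs i).comp (measurable_pi_apply i)).trans (Finset.prod_congr rfl fun i _ ↦ ?_)
  rw [withDensity_apply _ (hs i), ← lintegral_indicator (hs i),
    ← (measurePreserving_eval μ i).lintegral_comp (hfs i)]

lemma ProbabilityTheory.gaussianReal_withDensity_exp (m : ℝ) (v : ℝ≥0) (t : ℝ) :
    (gaussianReal m v).withDensity (fun x ↦ ENNReal.ofReal (exp (t * (x - m) - v * t ^ 2 / 2))) =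
      gaussianReal (m + v * t) v := by
  obtain rfl | hv := eq_or_ne v 0
  · simp [gaussianReal_zero_var, dirac_withDensity]
  rw [gaussianReal_of_var_ne_zero _ hv, gaussianReal_of_var_ne_zero _ hv,
    ← withDensity_mul _ (measurable_gaussianPDF _ _) (by fun_prop)]
  congr 1 with x
  simp only [Pi.mul_apply, gaussianPDF, ← ENNReal.ofReal_mul (gaussianPDFReal_nonneg _ _ _)]
  congr 1
  simp only [gaussianPDFReal, mul_assoc, ← exp_add]
  congr 2
  have : (v : ℝ) ≠ 0 := by exact_mod_cast hv
  field_simp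
  ring

lemma gaussianReal_real_Ici (m : ℝ) {v : ℝ≥0} (hv : v ≠ 0) (k : ℝ) :
    (gaussianReal m v).real (Set.Ici k) = stdNormalCDF ((m - k) / √v) := by
  have hsv : 0 < √(v : ℝ) := sqrt_pos.mpr (by positivity)
  have hmap : (gaussianReal 0 1).map (fun x ↦ m - √v * x) = gaussianReal m v := by
    rw [show (fun x ↦ m - √v * x) = (m - ·) ∘ (√(v : ℝ) * ·) from rfl,
      ← Measure.map_map (by fun_prop) (by fun_prop), gaussianReal_map_const_mul,
      gaussianReal_map_const_sub]
    congr 1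
    · simp
    · ext; simp [sq_sqrt v.coe_nonneg]
  have hpre : (fun x ↦ m - √v * x) ⁻¹' Set.Ici k = Set.Iic ((m - k) / √v) := by
    ext x
    simp only [Set.mem_preimage, Set.mem_Ici, Set.mem_Iic, le_div_iff₀ hsv]
    constructor <;> intro h <;> linarith
  rw [← hmap, map_measureReal_apply (by fun_prop) measurableSet_Ici, hpre, stdNormalCDF,
    measureReal_def]

section

variable {E : Type*} [NormedAddCommGroup E] [InnerProductSpace ℝ E] [FiniteDimensional ℝ E]
  [MeasurableSpace E] [BorelSpace E]

theorem ProbabilityTheory.stdGaussian_withDensity_exp_inner (a : E) :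
    (stdGaussian E).withDensity (fun x ↦ ENNReal.ofReal (exp (⟪a, x⟫ - ‖a‖ ^ 2 / 2))) =
      (stdGaussian E).map (· + a) := by
  let b := stdOrthonormalBasis ℝ E
  let φ : (Fin (Module.finrank ℝ E) → ℝ) → E := fun x ↦ ∑ i, x i • b i
  have hφ : Measurable φ := by fun_prop
  have hshift : (· + a) ∘ φ = φ ∘ fun x i ↦ x i + ⟪b i, a⟫ := by
    ext x; simp [φ, add_smul, Finset.sum_add_distrib, b.sum_repr']
  have hdens : (fun x ↦ ENNReal.ofReal (exp (⟪a, x⟫ - ‖a‖ ^ 2 / 2))) ∘ φ =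
      fun x ↦ ∏ i, ENNReal.ofReal (exp (⟪b i, a⟫ * x i - ⟪b i, a⟫ ^ 2 / 2)) := by
    ext x
    rw [← ENNReal.ofReal_prod_of_nonneg fun i _ ↦ (exp_pos _).le, ← exp_sum]
    simp [φ, inner_sum, real_inner_smul_right, Finset.sum_sub_distrib, ← b.sum_sq_inner_left a,
      Finset.sum_div, real_inner_comm, mul_comm]
  have htilt (t : ℝ) :
      (gaussianReal 0 1).withDensity (fun y ↦ ENNReal.ofReal (exp (t * y - t ^ 2 / 2))) =
        (gaussianReal 0 1).map (· + t) := by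
    simpa [gaussianReal_map_add_const] using gaussianReal_withDensity_exp 0 1 t
  have hγ : stdGaussian E = (Measure.pi fun _ ↦ gaussianReal 0 1).map φ := rfl
  rw [hγ, ← Measure.map_withDensity_comp _ hφ (by fun_prop), hdens,
    Measure.pi_withDensity (f := fun i y ↦ ENNReal.ofReal (exp (⟪b i, a⟫ * y - ⟪b i, a⟫ ^ 2 / 2)))
      (by fun_prop), Measure.map_map (by fun_prop) hφ, hshift,
    ← Measure.map_map hφ (by fun_prop),
    Measure.pi_map_pi (f := fun i y ↦ y + ⟪b i, a⟫) (by fun_prop)]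
  simp_rw [htilt]

lemma ProbabilityTheory.stdGaussian_map_inner (c : E) :
    (stdGaussian E).map (⟪c, ·⟫) = gaussianReal 0 (‖c‖₊ ^ 2) := by
  have h := IsGaussian.map_eq_gaussianReal (μ := stdGaussian E) (innerSL ℝ c)
  rw [integral_strongDual_stdGaussian, variance_dual_stdGaussian, innerSL_apply_norm] at h
  convert h using 2
  · ext
    simp
  · rw [Real.toNNReal_pow (norm_nonneg c), norm_toNNReal]

theorem integral_exp_inner_mul_ite_stdGaussian (a c : E) (hc : c ≠ 0) (k : ℝ) :
    ∫ x, exp ⟪a, x⟫ * (if k ≤ ⟪c, x⟫ then 1 else 0) ∂(stdGaussian E) =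
      exp (‖a‖ ^ 2 / 2) * stdNormalCDF ((⟪c, a⟫ - k) / ‖c‖) := by
  set S : Set E := (⟪c, ·⟫) ⁻¹' Set.Ici k
  have hS : MeasurableSet S := measurableSet_Ici.preimage (by fun_prop)
  have hlaw : ((stdGaussian E).map (· + a)).map (⟪c, ·⟫) = gaussianReal ⟪c, a⟫ (‖c‖₊ ^ 2) := by
    rw [Measure.map_map (by fun_prop) (by fun_prop)]
    have hcomp : (⟪c, ·⟫) ∘ (· + a) = (· + ⟪c, a⟫) ∘ (⟪c, ·⟫ : E → ℝ) := by
      ext; simp [inner_add_right]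
    rw [hcomp, ← Measure.map_map (by fun_prop) (by fun_prop), stdGaussian_map_inner,
      gaussianReal_map_add_const, zero_add]
  calc ∫ x, exp ⟪a, x⟫ * (if k ≤ ⟪c, x⟫ then 1 else 0) ∂(stdGaussian E)
      = ∫ x, exp (‖a‖ ^ 2 / 2) *
          ((ENNReal.ofReal (exp (⟪a, x⟫ - ‖a‖ ^ 2 / 2))).toReal • S.indicator 1 x)
          ∂(stdGaussian E) := by
        congr 1 with x
        rw [ENNReal.toReal_ofReal (exp_pos _).le, exp_sub]
        by_cases h : k ≤ ⟪c, x⟫ <;> simp [S, h, mul_div_cancel₀ _ (exp_pos _).ne']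
    _ = exp (‖a‖ ^ 2 / 2) * ((stdGaussian E).map (· + a)).real S := by
        rw [integral_const_mul, ← integral_withDensity_eq_integral_toReal_smul (by fun_prop)
          (ae_of_all _ fun _ ↦ ENNReal.ofReal_lt_top), stdGaussian_withDensity_exp_inner,
          integral_indicator_one hS]
    _ = exp (‖a‖ ^ 2 / 2) * stdNormalCDF ((⟪c, a⟫ - k) / ‖c‖) := by
        rw [← map_measureReal_apply (by fun_prop) measurableSet_Ici, hlaw,
          gaussianReal_real_Ici _ (by simpa using hc)]
        simp

end

lemma stdGaussian_eq_stdGaussian_euclideanSpace (d : ℕ) :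
    stdGaussian d = ProbabilityTheory.stdGaussian (EuclideanSpace ℝ (Fin d)) :=
  map_pi_eq_stdGaussian

theorem stmt5_general (σI σS : EuclideanSpace ℝ (Fin 2)) (hne : σI ≠ σS)
    (T b r : ℝ) (hT : 0 < T) :
    Real.exp (-r * T) *
      ∫ ξ, Real.exp ((r - ‖σI‖ ^ 2 / 2) * T + Real.sqrt T * (inner ℝ σI ξ : ℝ)) *
        (if Real.log b + ((‖σS‖ ^ 2 - ‖σI‖ ^ 2) / 2) * T
              ≤ Real.sqrt T * (inner ℝ (σS - σI) ξ : ℝ)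
         then (1 : ℝ) else 0) ∂(stdGaussian 2)
      = stdNormalCDF (-(((‖σS - σI‖ ^ 2 / 2) * T + Real.log b) /
          (‖σS - σI‖ * Real.sqrt T))) := by
  set k := log b + ((‖σS‖ ^ 2 - ‖σI‖ ^ 2) / 2) * T
  have hd : σS - σI ≠ 0 := sub_ne_zero.mpr hne.symm
  have hsT : 0 < √T := sqrt_pos.mpr hT
  have hintegrand (ξ : EuclideanSpace ℝ (Fin 2)) :
      exp ((r - ‖σI‖ ^ 2 / 2) * T + √T * ⟪σI, ξ⟫) * (if k ≤ √T * ⟪σS - σI, ξ⟫ then 1 else 0) =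
        exp ((r - ‖σI‖ ^ 2 / 2) * T) *
          (exp ⟪√T • σI, ξ⟫ * if k ≤ ⟪√T • (σS - σI), ξ⟫ then 1 else 0) := by
    simp only [real_inner_smul_left, exp_add, mul_assoc]
  simp_rw [hintegrand, stdGaussian_eq_stdGaussian_euclideanSpace]
  rw [integral_const_mul, integral_exp_inner_mul_ite_stdGaussian _ _ (smul_ne_zero hsT.ne' hd)]
  have hexp : exp (-r * T) * (exp ((r - ‖σI‖ ^ 2 / 2) * T) * exp (‖√T • σI‖ ^ 2 / 2)) = 1 := by
    rw [← exp_add, ← exp_add, norm_smul, mul_pow, norm_of_nonneg hsT.le, sq_sqrt hT.le,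
      ← exp_zero]
    ring_nf
  have hnormS : ‖σS‖ ^ 2 = ‖σI‖ ^ 2 + 2 * ⟪σI, σS - σI⟫ + ‖σS - σI‖ ^ 2 := by
    rw [← norm_add_sq_real, add_sub_cancel]
  have harg : (⟪√T • (σS - σI), √T • σI⟫ - k) / ‖√T • (σS - σI)‖ =
      -((‖σS - σI‖ ^ 2 / 2 * T + log b) / (‖σS - σI‖ * √T)) := by
    rw [real_inner_smul_left, real_inner_smul_right, norm_smul, norm_of_nonneg hsT.le,
      ← mul_assoc, mul_self_sqrt hT.le, real_inner_comm]
    simp only [k, hnormS]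
    ring
  rw [harg, ← mul_assoc, ← mul_assoc, mul_assoc (exp _), hexp, one_mul]

theorem stmt5 (σI σS : EuclideanSpace ℝ (Fin 2)) (hne : σI ≠ σS)
    (T b r : ℝ) (hT : 0 < T) (hb : 0 < b) :
    Real.exp (-r * T) *
      ∫ ξ, Real.exp ((r - ‖σI‖ ^ 2 / 2) * T + Real.sqrt T * (inner ℝ σI ξ : ℝ)) *
        (if Real.log b + ((‖σS‖ ^ 2 - ‖σI‖ ^ 2) / 2) * T
              ≤ Real.sqrt T * (inner ℝ (σS - σI) ξ : ℝ)
         then (1 : ℝ) else 0) ∂(stdGaussian 2)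
      = stdNormalCDF (-(((‖σS - σI‖ ^ 2 / 2) * T + Real.log b) /
          (‖σS - σI‖ * Real.sqrt T))) :=
  stmt5_general σI σS hne T b r hT
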